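/- Let X be a compact metric space containing a free interval. If f : X → X is continuous and weakly mixing, then the topological entropy of f is positive. -/

import Mathlib

/-- `f` is topologically transitive. -/
def TopTransitive {X : Type*} [TopologicalSpace X] (f : X → X) : Prop :=
  ∀ U V : Set X, IsOpen U → IsOpen V → U.Nonempty → V.Nonempty →
    ∃ k : ℕ, (f^[k] '' U ∩ V).Nonempty

/-- `f` is topologically mixing. -/
def TopMixing {X : Type*} [TopologicalSpace X] (f : X → X) : Prop :=
  ∀ U V : Set X, IsOpen U → IsOpen V → U.Nonempty → V.Nonempty →
    ∃ N : ℕ, ∀ n ≥ N, (f^[n] '' U ∩ V).Nonempty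

/-- `X` contains a free interval: an open subset homeomorphic to `(0,1) ⊆ ℝ`. -/
def HasFreeInterval (X : Type*) [TopologicalSpace X] : Prop :=
  ∃ J : Set X, IsOpen J ∧ Nonempty (J ≃ₜ Set.Ioo (0 : ℝ) 1)

/-- `f` is weakly mixing: `f × f` is transitive. -/
def WeaklyMixing {X : Type*} [TopologicalSpace X] (f : X → X) : Prop :=
  TopTransitive (fun p : X × X => (f p.1, f p.2))

/-!
Pull the free interval back to an open embedding `γ : ℝ → X`. By weak mixing, some iterate
`f^[m]` sends one point of a nondegenerate arc `γ [p, q]` into `γ (0, 1)` and another into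
`γ (3, 4)`. Following the image of the arc from the first point, either it stays inside the
window `γ (-5, 5)`, and the intermediate value theorem between the two points covers `γ [1, 2]`,
or it runs through an end of the window and covers `γ [-2, -1]` or `γ [1, 2]`. So every arc
eventually covers `L = γ [-2, -1]` or `R = γ [1, 2]`. If `R` covers `L`, every subarc of `L`
covers `L`; otherwise every subarc of `R` covers `R`. Two disjoint subarcs covering their common
parent arc form a horseshoe: with `n` the common covering time, each of the `2 ^ r` itineraries
through the two blocks is realised by an orbit, and these orbits are separated up to time `n r`,
so the entropy is at least `log 2 / n`.
-/

open Set Function Topology Dynamics Uniformity UniformSpace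

namespace Dynamics

variable {X ι : Type*} {f : X → X}

theorem exists_iterate_mul_mem_of_subset_image {K : ι → Set X} {n : ℕ}
    (hK : ∀ i j, K j ⊆ f^[n] '' K i) (hne : ∀ i, (K i).Nonempty) (r : ℕ) (w : ℕ → ι) :
    ∃ x, ∀ j ≤ r, f^[n * j] x ∈ K (w j) := by
  induction r generalizing w with
  | zero =>
    obtain ⟨x, hx⟩ := hne (w 0)
    exact ⟨x, fun j hj => by simpa [Nat.le_zero.mp hj] using hx⟩
  | succ r ih =>
    obtain ⟨y, hy⟩ := ih (fun j => w (j + 1))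
    obtain ⟨x, hx, rfl⟩ := hK (w 0) (w 1) (by simpa using hy 0 r.zero_le)
    refine ⟨x, fun j hj => ?_⟩
    cases j with
    | zero => simpa using hx
    | succ j =>
      rw [Nat.mul_succ, iterate_add_apply]
      exact hy j (Nat.succ_le_succ_iff.mp hj)

theorem pow_card_le_netMaxcard [UniformSpace X] [Fintype ι] [Nonempty ι] {K : ι → Set X}
    {n : ℕ} (hn : n ≠ 0) (hK : ∀ i j, K j ⊆ f^[n] '' K i) (hne : ∀ i, (K i).Nonempty)
    {U : SetRel X X} (hU : U ∈ 𝓤 X)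
    (hsep : Pairwise (Disjoint on fun i => ⋃ x ∈ K i, ball x U)) (r : ℕ) :
    (Fintype.card ι : ℕ∞) ^ r ≤ netMaxcard f univ U (n * r) := by
  classical
  have hword (v : Fin r → ι) : ∃ x, ∀ j : Fin r, f^[n * j] x ∈ K (v j) := by
    obtain ⟨x, hx⟩ := exists_iterate_mul_mem_of_subset_image hK hne r
      (fun j => if h : j < r then v ⟨j, h⟩ else Classical.arbitrary ι)
    exact ⟨x, fun j => by simpa using hx j j.2.le⟩
  choose pt hpt using hword
  have hdisj {v v' : Fin r → ι} (hvv' : v ≠ v') :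
      Disjoint (ball (pt v) (dynEntourage f U (n * r)))
        (ball (pt v') (dynEntourage f U (n * r))) := by
    obtain ⟨j, hj⟩ := Function.ne_iff.mp hvv'
    have hjr : n * j < n * r := Nat.mul_lt_mul_of_pos_left j.2 (Nat.pos_of_ne_zero hn)
    exact Set.disjoint_left.mpr fun z hz hz' => Set.disjoint_left.mp (hsep hj)
      (mem_biUnion (hpt v j) (mem_ball_dynEntourage.mp hz _ hjr))
      (mem_biUnion (hpt v' j) (mem_ball_dynEntourage.mp hz' _ hjr))
  have hinj : Injective pt := fun v v' h => by
    by_contra hvv'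
    have hself : pt v ∈ ball (pt v) (dynEntourage f U (n * r)) :=
      mem_ball_dynEntourage.mpr fun _ _ => refl_mem_uniformity hU
    exact Set.disjoint_left.mp (hdisj hvv') hself (h ▸ hself)
  have hnet : IsDynNetIn f univ U (n * r) (Finset.univ.image pt : Set X) := by
    refine ⟨subset_univ _, ?_⟩
    rintro _ hx _ hy hxy
    simp only [Finset.coe_image, Finset.coe_univ, image_univ, mem_range] at hx hy
    obtain ⟨v, rfl⟩ := hx
    obtain ⟨v', rfl⟩ := hy
    exact hdisj fun h => hxy (h ▸ rfl)
  calc (Fintype.card ι : ℕ∞) ^ r = (Finset.univ.image pt).card := by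
        rw [Finset.card_image_of_injective _ hinj, Finset.card_univ, Fintype.card_fun,
          Fintype.card_fin]
        push_cast; rfl
    _ ≤ netMaxcard f univ U (n * r) := hnet.card_le_netMaxcard

theorem log_le_mul_coverEntropy_of_pow_le_netMaxcard [UniformSpace X] {F : Set X}
    {U : SetRel X X} (hU : U ∈ 𝓤 X) {n k : ℕ} (hn : n ≠ 0)
    (h : ∀ r, (k : ℕ∞) ^ r ≤ netMaxcard f F U (n * r)) :
    ENNReal.log k ≤ n * coverEntropy f F :=
  calc ENNReal.log k = ExpGrowth.expGrowthSup fun r => (k : ENNReal) ^ r :=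
        ExpGrowth.expGrowthSup_pow.symm
    _ ≤ ExpGrowth.expGrowthSup fun r => (netMaxcard f F U (n * r) : ENNReal) :=
        ExpGrowth.expGrowthSup_monotone fun r => by
          simpa [ENat.toENNReal_pow] using ENat.toENNReal_le.mpr (h r)
    _ = n * netEntropyEntourage f F U :=
        (ENat.toENNReal_mono.comp (netMaxcard_monotone_time f F U)).expGrowthSup_comp_mul hn
    _ ≤ n * coverEntropy f F := by gcongr; exact netEntropyEntourage_le_coverEntropy f F hU

theorem coverEntropy_pos_of_horseshoe [UniformSpace X] [T2Space X] {K₁ K₂ : Set X} {n : ℕ}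
    (hK₁ : IsCompact K₁) (hK₂ : IsClosed K₂) (hne : K₁.Nonempty) (hdisj : Disjoint K₁ K₂)
    (h₁ : K₁ ∪ K₂ ⊆ f^[n] '' K₁) (h₂ : K₁ ∪ K₂ ⊆ f^[n] '' K₂) :
    0 < coverEntropy f univ := by
  have hn : n ≠ 0 := by
    rintro rfl
    simp only [iterate_zero, image_id, union_subset_iff] at h₂
    exact hne.ne_empty (hdisj.eq_bot_of_le h₂.1)
  obtain ⟨U, hU, hsep⟩ := hdisj.exists_uniform_thickening hK₁ hK₂
  let K : Bool → Set X := fun b => cond b K₁ K₂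
  have hK (i j : Bool) : K j ⊆ f^[n] '' K i :=
    (by cases j <;> simp [K] : K j ⊆ K₁ ∪ K₂).trans (by cases i; exacts [h₂, h₁])
  have hKne (i : Bool) : (K i).Nonempty := by
    cases i
    exacts [(hne.mono (subset_union_left.trans h₂)).of_image, hne]
  have hKsep : Pairwise (Disjoint on fun i => ⋃ x ∈ K i, ball x U) := by
    intro i j hij
    cases i <;> cases j <;> simp_all [K, onFun, disjoint_comm]
  have hlog := log_le_mul_coverEntropy_of_pow_le_netMaxcard hU hn
    (pow_card_le_netMaxcard hn hK hKne hU hKsep)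
  have hpos : (0 : EReal) < ENNReal.log (Fintype.card Bool) := by simp
  rcases EReal.mul_pos_iff.mp (hpos.trans_le hlog) with h | h
  · exact h.2
  · exact absurd h.1 (by simp)

end Dynamics

section Covering

variable {X : Type*} {f : X → X}

def Covers (f : X → X) (A B : Set X) : Prop := ∃ m, B ⊆ f^[m] '' A

theorem Covers.trans {A B C : Set X} (hAB : Covers f A B) (hBC : Covers f B C) :
    Covers f A C := by
  obtain ⟨m, hm⟩ := hAB
  obtain ⟨k, hk⟩ := hBC
  exact ⟨k + m, hk.trans <| by rw [iterate_add, image_comp]; exact image_mono hm⟩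

theorem Covers.mono_left {A A' B : Set X} (h : Covers f A B) (hA : A ⊆ A') : Covers f A' B :=
  let ⟨m, hm⟩ := h
  ⟨m, hm.trans (image_mono hA)⟩

theorem coverEntropy_pos_of_covers [UniformSpace X] [T2Space X] {K₁ K₂ T : Set X}
    (hK₁ : IsCompact K₁) (hK₂ : IsClosed K₂) (hne : K₁.Nonempty) (hdisj : Disjoint K₁ K₂)
    (hK₁T : K₁ ⊆ T) (hK₂T : K₂ ⊆ T) (h₁ : Covers f K₁ T) (h₂ : Covers f K₂ T) :
    0 < coverEntropy f univ := by
  obtain ⟨m₁, hm₁⟩ := h₁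
  obtain ⟨m₂, hm₂⟩ := h₂
  -- Passing once through the other block makes both blocks cover `T` in the same time.
  have hround {A B : Set X} {a b : ℕ} (hA : T ⊆ f^[a] '' A) (hB : T ⊆ f^[b] '' B)
      (hBT : B ⊆ T) : K₁ ∪ K₂ ⊆ f^[b + a] '' A := by
    rw [iterate_add, image_comp]
    exact (union_subset hK₁T hK₂T).trans (hB.trans (image_mono (hBT.trans hA)))
  exact coverEntropy_pos_of_horseshoe hK₁ hK₂ hne hdisj (hround hm₁ hm₂ hK₂T)
    (add_comm m₁ m₂ ▸ hround hm₂ hm₁ hK₁T)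

end Covering

section Arc

variable {X : Type*} [TopologicalSpace X]

theorem Topology.IsEmbedding.image_uIcc_subset_image {γ : ℝ → X} (hγ : IsEmbedding γ)
    {F : ℝ → X} {a b s t : ℝ} (hF : ContinuousOn F (uIcc a b))
    (hFγ : F '' uIcc a b ⊆ range γ) (ha : F a = γ s) (hb : F b = γ t) :
    γ '' uIcc s t ⊆ F '' uIcc a b := by
  set g : ℝ → ℝ := fun x => invFun γ (F x)
  have hg : EqOn (γ ∘ g) F (uIcc a b) := fun x hx => invFun_eq (hFγ (mem_image_of_mem F hx))
  have hgc : ContinuousOn g (uIcc a b) := hγ.isInducing.continuousOn_iff.mpr (hF.congr hg)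
  have hga : g a = s := hγ.injective ((hg left_mem_uIcc).trans ha)
  have hgb : g b = t := hγ.injective ((hg right_mem_uIcc).trans hb)
  calc γ '' uIcc s t ⊆ γ '' (g '' uIcc a b) :=
        image_mono (hga ▸ hgb ▸ intermediate_value_uIcc hgc)
    _ = F '' uIcc a b := by rw [image_image]; exact image_congr hg

theorem exists_image_uIcc_subset_closure {F : ℝ → X} (hF : Continuous F) {W : Set X}
    (hW : IsOpen W) {p q x : ℝ} (hx : x ∈ Icc p q) (hFx : F x ∈ W)
    (hout : ¬F '' Icc p q ⊆ W) :
    ∃ t ∈ Icc p q, F t ∉ W ∧ F '' uIcc x t ⊆ closure W := by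
  have hS : IsCompact (Icc p q ∩ F ⁻¹' Wᶜ) :=
    isCompact_Icc.inter_right (hW.isClosed_compl.preimage hF)
  have hSne : (Icc p q ∩ F ⁻¹' Wᶜ).Nonempty := by
    rwa [image_subset_iff, not_subset] at hout
  obtain ⟨t, ⟨htI, htW⟩, hmin⟩ := hS.exists_isMinOn hSne (f := fun u => |u - x|)
    (continuous_id.sub continuous_const).abs.continuousOn
  refine ⟨t, htI, htW, ?_⟩
  have htx : x ≠ t := fun h => htW (h ▸ hFx)
  have hseg : openSegment ℝ x t ⊆ F ⁻¹' W := by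
    intro u hu
    rw [openSegment_eq_Ioo' htx] at hu
    have hnearer : |u - x| < |t - x| := by
      rcases le_total x t with h | h
      · simp only [min_eq_left h, max_eq_right h, mem_Ioo] at hu
        rw [abs_of_pos (by linarith), abs_of_nonneg (by linarith)]
        linarith
      · simp only [min_eq_right h, max_eq_left h, mem_Ioo] at hu
        rw [abs_of_neg (by linarith), abs_of_nonpos (by linarith)]
        linarith
    by_contra hFu
    exact hnearer.not_ge
      (hmin ⟨ordConnected_Icc.uIcc_subset hx htI (Ioo_subset_Icc_self hu), hFu⟩)
  rw [image_subset_iff, ← segment_eq_uIcc, ← closure_openSegment]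
  exact closure_minimal (hseg.trans (preimage_mono subset_closure))
    (isClosed_closure.preimage hF)

theorem Topology.IsOpenEmbedding.image_Icc_subset_or [T2Space X] {γ : ℝ → X}
    (hγ : IsOpenEmbedding γ) {F : ℝ → X} (hF : Continuous F) {p q x w R : ℝ}
    (hx : x ∈ Icc p q) (hFx : F x = γ w) (hw : w ∈ Ioo (-R) R) :
    F '' Icc p q ⊆ γ '' Ioo (-R) R ∨ γ '' Icc (-R) w ⊆ F '' Icc p q ∨
      γ '' Icc w R ⊆ F '' Icc p q := by
  by_cases hin : F '' Icc p q ⊆ γ '' Ioo (-R) R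
  · exact Or.inl hin
  obtain ⟨t, htI, htW, hxt⟩ := exists_image_uIcc_subset_closure hF
    (hγ.isOpenMap _ isOpen_Ioo) hx (hFx ▸ mem_image_of_mem γ hw) hin
  have hclosure : closure (γ '' Ioo (-R) R) ⊆ γ '' Icc (-R) R :=
    closure_minimal (image_mono Ioo_subset_Icc_self)
      (isCompact_Icc.image hγ.continuous).isClosed
  obtain ⟨s, hs, hFt⟩ := hclosure (hxt (mem_image_of_mem F right_mem_uIcc))
  have hcov : γ '' uIcc w s ⊆ F '' Icc p q :=
    (hγ.isEmbedding.image_uIcc_subset_image hF.continuousOn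
      ((hxt.trans hclosure).trans (image_subset_range _ _)) hFx hFt.symm).trans
      (image_mono (ordConnected_Icc.uIcc_subset hx htI))
  have hsR : s = -R ∨ s = R := by
    by_contra! h
    exact htW (hFt ▸ mem_image_of_mem γ ⟨hs.1.lt_of_ne (Ne.symm h.1), hs.2.lt_of_ne h.2⟩)
  rcases hsR with rfl | rfl
  · exact Or.inr (Or.inl (uIcc_of_ge hw.1.le ▸ hcov))
  · exact Or.inr (Or.inr (uIcc_of_le hw.2.le ▸ hcov))

theorem WeaklyMixing.exists_iterate_mem {f : X → X} (hf : WeaklyMixing f) {U V V' : Set X}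
    (hU : IsOpen U) (hV : IsOpen V) (hV' : IsOpen V') (hUne : U.Nonempty) (hVne : V.Nonempty)
    (hV'ne : V'.Nonempty) : ∃ m, ∃ x ∈ U, ∃ x' ∈ U, f^[m] x ∈ V ∧ f^[m] x' ∈ V' := by
  obtain ⟨m, _, ⟨⟨x, x'⟩, ⟨hx, hx'⟩, rfl⟩, hxV, hx'V'⟩ :=
    hf _ _ (hU.prod hU) (hV.prod hV') (hUne.prod hUne) (hVne.prod hV'ne)
  rw [show (fun p : X × X => (f p.1, f p.2)) = Prod.map f f from rfl, Prod.map_iterate]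
    at hxV hx'V'
  exact ⟨m, x, hx, x', hx', hxV, hx'V'⟩

theorem WeaklyMixing.covers_or_covers [T2Space X] {f : X → X} (hwm : WeaklyMixing f)
    (hf : Continuous f) {γ : ℝ → X} (hγ : IsOpenEmbedding γ) {p q : ℝ} (hpq : p < q) :
    Covers f (γ '' Icc p q) (γ '' Icc (-2) (-1)) ∨ Covers f (γ '' Icc p q) (γ '' Icc 1 2) := by
  have hopen (a b : ℝ) : IsOpen (γ '' Ioo a b) := hγ.isOpenMap _ isOpen_Ioo
  have hne {a b : ℝ} (h : a < b) : (γ '' Ioo a b).Nonempty := (nonempty_Ioo.mpr h).image γ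
  obtain ⟨m, _, ⟨x, hx, rfl⟩, _, ⟨x', hx', rfl⟩, ⟨w, hw, hFx⟩, ⟨w', hw', hFx'⟩⟩ :=
    hwm.exists_iterate_mem (hopen p q) (hopen 3 4) (hopen 0 1) (hne hpq) (hne (by norm_num))
      (hne (by norm_num))
  have hF : Continuous (f^[m] ∘ γ) := (hf.iterate m).comp hγ.continuous
  simp only [Covers, ← image_comp]
  rcases hγ.image_Icc_subset_or hF (Ioo_subset_Icc_self hx') hFx'.symm (R := 5)
      ⟨by linarith [hw'.1], by linarith [hw'.2]⟩ with hin | hleft | hright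
  · have hxx' : uIcc x' x ⊆ Icc p q :=
      ordConnected_Icc.uIcc_subset (Ioo_subset_Icc_self hx') (Ioo_subset_Icc_self hx)
    have hcov := hγ.isEmbedding.image_uIcc_subset_image hF.continuousOn
      ((image_mono hxx').trans (hin.trans (image_subset_range _ _))) hFx'.symm hFx.symm
    refine Or.inr ⟨m, (image_mono ?_).trans (hcov.trans (image_mono hxx'))⟩
    rw [uIcc_of_le (by linarith [hw.1, hw'.2])]
    exact Icc_subset_Icc (by linarith [hw'.2]) (by linarith [hw.1])
  · exact Or.inl ⟨m, (image_mono (Icc_subset_Icc (by norm_num) (by linarith [hw'.1]))).trans hleft⟩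
  · exact Or.inr ⟨m, (image_mono (Icc_subset_Icc (by linarith [hw'.2]) (by norm_num))).trans hright⟩

end Arc

theorem coverEntropy_pos_of_covers_Icc {X : Type*} [UniformSpace X] [T2Space X] {f : X → X}
    {γ : ℝ → X} (hγ : IsEmbedding γ) {a b : ℝ} (hab : a < b)
    (h : ∀ p q, a ≤ p → p < q → q ≤ b → Covers f (γ '' Icc p q) (γ '' Icc a b)) :
    0 < coverEntropy f univ := by
  have hK (p q : ℝ) : IsCompact (γ '' Icc p q) := isCompact_Icc.image hγ.continuous
  refine coverEntropy_pos_of_covers (K₁ := γ '' Icc a ((2 * a + b) / 3))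
    (K₂ := γ '' Icc ((a + 2 * b) / 3) b) (hK _ _) (hK _ _).isClosed
    ((nonempty_Icc.mpr (by linarith)).image γ) ?_
    (image_mono (Icc_subset_Icc le_rfl (by linarith)))
    (image_mono (Icc_subset_Icc (by linarith) le_rfl))
    (h _ _ le_rfl (by linarith) (by linarith)) (h _ _ (by linarith) (by linarith) le_rfl)
  rw [disjoint_image_iff hγ.injective, Set.disjoint_left]
  exact fun t h₁ h₂ => by linarith [h₁.2, h₂.1]

theorem WeaklyMixing.coverEntropy_pos {X : Type*} [UniformSpace X] [T2Space X] {f : X → X}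
    (hwm : WeaklyMixing f) (hf : Continuous f) {γ : ℝ → X} (hγ : IsOpenEmbedding γ) :
    0 < coverEntropy f univ := by
  by_cases hRL : Covers f (γ '' Icc 1 2) (γ '' Icc (-2) (-1))
  · refine coverEntropy_pos_of_covers_Icc hγ.isEmbedding (by norm_num : (-2 : ℝ) < -1)
      fun p q _ hpq _ => ?_
    exact (hwm.covers_or_covers hf hγ hpq).elim id fun h => h.trans hRL
  · refine coverEntropy_pos_of_covers_Icc hγ.isEmbedding (by norm_num : (1 : ℝ) < 2)
      fun p q hp hpq hq => ?_
    exact (hwm.covers_or_covers hf hγ hpq).resolve_left fun h =>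
      hRL (h.mono_left (image_mono (Icc_subset_Icc hp hq)))

theorem HasFreeInterval.exists_isOpenEmbedding {X : Type*} [TopologicalSpace X]
    (h : HasFreeInterval X) : ∃ γ : ℝ → X, IsOpenEmbedding γ := by
  obtain ⟨J, hJ, ⟨e⟩⟩ := h
  let σ : ℝ ≃o Ioo (0 : ℝ) 1 := StrictMono.orderIsoOfSurjective
    (codRestrict Real.sigmoid _ fun x => ⟨Real.sigmoid_pos x, Real.sigmoid_lt_one x⟩)
    (fun _ _ h => Real.sigmoid_strictMono h)
    (fun y => let ⟨x, hx⟩ := Real.range_sigmoid.symm.subset y.2; ⟨x, Subtype.ext hx⟩)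
  exact ⟨_, hJ.isOpenEmbedding_subtypeVal.comp (σ.toHomeomorph.trans e.symm).isOpenEmbedding⟩

theorem stmt_12_general {X : Type*} [MetricSpace X]
    (hX : HasFreeInterval X)
    (f : X → X) (hf : Continuous f) (hwm : WeaklyMixing f) :
    0 < Dynamics.coverEntropy f Set.univ := by
  obtain ⟨γ, hγ⟩ := hX.exists_isOpenEmbedding
  exact hwm.coverEntropy_pos hf hγ

theorem stmt_12 {X : Type*} [MetricSpace X] [CompactSpace X]
    (hX : HasFreeInterval X)
    (f : X → X) (hf : Continuous f) (hwm : WeaklyMixing f) :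
    0 < Dynamics.coverEntropy f Set.univ :=
  stmt_12_general hX f hf hwm
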